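/- Let F be a temporal path with vertices v₀,…,v_{n−1}, let 𝓕 be the weighted successor forest where a node (ℓ,i) exists for each i and ℓ ∈ λ(e_i), parent given by σ_i (as in context), with edges of the form ((·,i),(·,i)) having weight 0 and edges ((·,i),(·,i+1)) having weight 1. Then for i < j, with ℓ = succ(t, λ(e_i)): EA(v_i, v_j, t) = +∞ if ℓ = +∞ or the (j−i−1)-th weighted level ancestor of (ℓ, i) does not exist; otherwise that ancestor is a node of the form (ℓ*, j−1) and EA(v_i, v_j, t) = ℓ*. -/

import Mathlib

/-- Embedding of `ℤ` into `EReal`. -/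
def iE (n : ℤ) : EReal := ((n : ℝ) : EReal)

/-- `succ t X` : the minimum element of `X ⊆ ℤ` that is `≥ t`, or `+∞` if none. -/
noncomputable def eSucc (t : EReal) (X : Set ℤ) : EReal :=
  sInf {y : EReal | ∃ x ∈ X, y = iE x ∧ t ≤ iE x}

/-- The parent map `σ` of the successor forest `𝓕` of a temporal path with `m` edges
`e_0, …, e_{m−1}` labelled by `lam`. `PParent lam m (ℓ, i) (q, j)` holds iff the
node `(q, j)` is `σ_i(ℓ)`: with `ℓ⁺ = succ(ℓ+1, λ(e_i))` and (for `i < m−1`)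
`ℓ' = succ(ℓ, λ(e_{i+1}))`, the parent is `(ℓ⁺, i)` if `ℓ⁺ ≤ ℓ'` (or `i = m−1` and
`ℓ⁺ < +∞`), and `(ℓ', i+1)` if `ℓ' < ℓ⁺`; undefined if both are `+∞`. -/
def PParent (lam : ℕ → Set ℤ) (m : ℕ) (x y : ℤ × ℕ) : Prop :=
  x.1 ∈ lam x.2 ∧ x.2 < m ∧
    ((y.2 = x.2 ∧ y.1 ∈ lam x.2 ∧ iE y.1 = eSucc (iE (x.1 + 1)) (lam x.2) ∧
        (x.2 + 1 = m ∨ iE y.1 ≤ eSucc (iE x.1) (lam (x.2 + 1)))) ∨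
      (y.2 = x.2 + 1 ∧ x.2 + 1 < m ∧ y.1 ∈ lam (x.2 + 1) ∧
        iE y.1 = eSucc (iE x.1) (lam (x.2 + 1)) ∧
        iE y.1 < eSucc (iE (x.1 + 1)) (lam x.2)))

/-- A journey on the temporal path graph: labels `f k ∈ lam k` for `i ≤ k < j`,
non-decreasing, with departure `f i` and arrival `f (j−1)`. -/
def PJourney (lam : ℕ → Set ℤ) (i j : ℕ) (dep arr : ℤ) : Prop :=
  ∃ f : ℕ → ℤ, (∀ k, i ≤ k → k < j → f k ∈ lam k) ∧
    (∀ k, i ≤ k → k + 1 < j → f k ≤ f (k + 1)) ∧ dep = f i ∧ arr = f (j - 1)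

/-- Earliest arrival time from `v_i` to `v_j` departing no earlier than `t`. -/
noncomputable def pEA (lam : ℕ → Set ℤ) (i j : ℕ) (t : EReal) : EReal :=
  sInf {a : EReal | ∃ dep arr : ℤ, PJourney lam i j dep arr ∧ t ≤ iE dep ∧ a = iE arr}

/-- Ancestor relation in the successor forest `𝓕`. -/
def PAnc (lam : ℕ → Set ℤ) (m : ℕ) : ℤ × ℕ → ℤ × ℕ → Prop :=
  Relation.ReflTransGen (PParent lam m)

/-- `PIsLA lam m x w a` : `a` is the `w`-th weighted level ancestor of `x` in `𝓕`,
i.e. the deepest ancestor of `x` at weighted distance at least `w` from `x`.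
Intra-edge (red) edges of `𝓕` have weight `0` and inter-edge (blue) edges weight `1`,
so the weighted distance from `x` to an ancestor `b` is `b.2 − x.2`. -/
def PIsLA (lam : ℕ → Set ℤ) (m : ℕ) (x : ℤ × ℕ) (w : ℕ) (a : ℤ × ℕ) : Prop :=
  PAnc lam m x a ∧ x.2 + w ≤ a.2 ∧
    ∀ b : ℤ × ℕ, PAnc lam m x b → x.2 + w ≤ b.2 → PAnc lam m a b

/-!
The forest `𝓕` mirrors journeys. Along an ancestor chain of `(ℓ, i)` a red edge raises the label
used on the current edge and a blue edge passes to the next edge at a label that is not smaller,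
so every ancestor `(q, k)` is the arrival of a journey `v_i → v_{k+1}` departing at `ℓ` or later.
Conversely, if a journey leaves edge `k` at label `c`, then from any ancestor `(q, k)` with `q ≤ c`
the chain climbs red edges while they stay below the successor of `q` in `λ(e_{k+1})`, and must
take a blue edge to a label `≤ c`. Ancestors of a node form a chain, so the level ancestor at level
`j − 1` is the first ancestor on edge `e_{j−1}`, which lies below every journey's arrival and is
itself an arrival.
-/

lemma iE_le_iE {a b : ℤ} : iE a ≤ iE b ↔ a ≤ b := by
  unfold iE
  rw [EReal.coe_le_coe_iff]
  exact_mod_cast Iff.rfl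

lemma iE_lt_top (a : ℤ) : iE a < ⊤ := EReal.coe_lt_top _

lemma iE_injective : Function.Injective iE := fun _ _ h =>
  le_antisymm (iE_le_iE.mp h.le) (iE_le_iE.mp h.ge)

lemma le_eSucc (t : EReal) (X : Set ℤ) : t ≤ eSucc t X :=
  le_sInf fun _ ⟨_, _, hy, ht⟩ => hy ▸ ht

lemma eSucc_le {t : EReal} {X : Set ℤ} {x : ℤ} (hx : x ∈ X) (ht : t ≤ iE x) :
    eSucc t X ≤ iE x :=
  sInf_le ⟨x, hx, rfl, ht⟩

lemma exists_iE_eq_eSucc {q : ℤ} {X : Set ℤ} (h : eSucc (iE q) X ≠ ⊤) :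
    ∃ y ∈ X, iE y = eSucc (iE q) X := by
  obtain ⟨_, x, hx, rfl, hqx⟩ : {y : EReal | ∃ x ∈ X, y = iE x ∧ iE q ≤ iE x}.Nonempty := by
    by_contra hempty
    rw [Set.not_nonempty_iff_eq_empty] at hempty
    exact h (by rw [eSucc, hempty, sInf_empty])
  obtain ⟨y, ⟨hyX, hqy⟩, hmin⟩ := Int.exists_least_of_bdd
    (P := fun z => z ∈ X ∧ q ≤ z) ⟨q, fun z hz => hz.2⟩ ⟨x, hx, iE_le_iE.mp hqx⟩
  refine ⟨y, hyX, le_antisymm (le_sInf ?_) (eSucc_le hyX (iE_le_iE.mpr hqy))⟩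
  rintro _ ⟨z, hzX, rfl, hqz⟩
  exact iE_le_iE.mpr (hmin z ⟨hzX, iE_le_iE.mp hqz⟩)

lemma le_iE_iff_of_iE_eq_eSucc {t : EReal} {X : Set ℤ} {ℓ d : ℤ} (hℓ : iE ℓ = eSucc t X)
    (hd : d ∈ X) : t ≤ iE d ↔ ℓ ≤ d :=
  ⟨fun ht => iE_le_iE.mp (hℓ ▸ eSucc_le hd ht),
    fun h => (le_eSucc t X).trans (hℓ ▸ iE_le_iE.mpr h)⟩

section Forest

variable {lam : ℕ → Set ℤ} {m : ℕ}

lemma PParent.mem_and_step {x y : ℤ × ℕ} (h : PParent lam m x y) :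
    y.1 ∈ lam y.2 ∧ (y.2 = x.2 ∧ x.1 < y.1 ∨ y.2 = x.2 + 1 ∧ x.1 ≤ y.1) := by
  obtain ⟨-, -, ⟨hy2, hy1, hsucc, -⟩ | ⟨hy2, -, hy1, hsucc, -⟩⟩ := h
  · have : x.1 + 1 ≤ y.1 := iE_le_iE.mp (hsucc ▸ le_eSucc _ _)
    exact ⟨hy2 ▸ hy1, .inl ⟨hy2, by omega⟩⟩
  · exact ⟨hy2 ▸ hy1, .inr ⟨hy2, iE_le_iE.mp (hsucc ▸ le_eSucc _ _)⟩⟩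

lemma PParent.right_unique : Relator.RightUnique (PParent lam m) := by
  rintro x y z ⟨-, -, hy⟩ ⟨-, -, hz⟩
  rcases hy with ⟨y2, -, y1, hy⟩ | ⟨y2, hym, -, y1, hy⟩ <;>
    rcases hz with ⟨z2, -, z1, hz⟩ | ⟨z2, hzm, -, z1, hz⟩
  · exact Prod.ext (iE_injective (y1.trans z1.symm)) (y2.trans z2.symm)
  · rcases hy with hy | hy
    · omega
    · exact absurd (lt_of_le_of_lt (z1 ▸ hy) (y1 ▸ hz)) (lt_irrefl _)
  · rcases hz with hz | hz
    · omega
    · exact absurd (lt_of_le_of_lt (y1 ▸ hz) (z1 ▸ hy)) (lt_irrefl _)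
  · exact Prod.ext (iE_injective (y1.trans z1.symm)) (y2.trans z2.symm)

lemma PAnc.le {x y : ℤ × ℕ} (h : PAnc lam m x y) : x.1 ≤ y.1 ∧ x.2 ≤ y.2 := by
  induction h with
  | refl => exact ⟨le_rfl, le_rfl⟩
  | tail _ hyz ih =>
    obtain ⟨-, hstep⟩ := hyz.mem_and_step
    omega

lemma PAnc.antisymm {x y : ℤ × ℕ} (hxy : PAnc lam m x y) (hyx : PAnc lam m y x) : x = y :=
  Prod.ext (le_antisymm hxy.le.1 hyx.le.1) (le_antisymm hxy.le.2 hyx.le.2)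

lemma PAnc.mem {x y : ℤ × ℕ} (h : PAnc lam m x y) (hx : x.1 ∈ lam x.2) : y.1 ∈ lam y.2 := by
  induction h with
  | refl => exact hx
  | tail _ hyz _ => exact hyz.mem_and_step.1

/-- Levels grow by at most one per edge, and parents are unique, so ancestors form a chain. -/
lemma PAnc.exists_first_at_level {x c : ℤ × ℕ} (h : PAnc lam m x c) {L : ℕ} (hxL : x.2 ≤ L)
    (hLc : L ≤ c.2) :
    ∃ a, PAnc lam m x a ∧ a.2 = L ∧ ∀ b, PAnc lam m x b → L ≤ b.2 → PAnc lam m a b := by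
  induction h using Relation.ReflTransGen.head_induction_on with
  | refl => exact ⟨c, .refl, le_antisymm hxL hLc, fun b hb _ => hb⟩
  | @head x y hxy _ ih =>
    by_cases hx : x.2 = L
    · exact ⟨x, .refl, hx, fun b hb _ => hb⟩
    obtain ⟨a, hya, ha, hmin⟩ := ih (by have := hxy.mem_and_step.2; omega)
    refine ⟨a, .head hxy hya, ha, fun b hxb hb => ?_⟩
    rcases hxb.cases_head with rfl | ⟨y', hxy', hy'b⟩
    · omega
    · exact hmin b (PParent.right_unique hxy hxy' ▸ hy'b) hb

lemma PIsLA.snd_eq {x a : ℤ × ℕ} {w : ℕ} (h : PIsLA lam m x w a) : a.2 = x.2 + w := by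
  obtain ⟨hxa, hw, hmin⟩ := h
  obtain ⟨a₀, hxa₀, ha₀, hmin₀⟩ := hxa.exists_first_at_level (Nat.le_add_right _ _) hw
  rw [(hmin a₀ hxa₀ ha₀.ge).antisymm (hmin₀ a hxa hw), ha₀]

lemma exists_PIsLA {x c : ℤ × ℕ} (h : PAnc lam m x c) {w : ℕ} (hw : x.2 + w ≤ c.2) :
    ∃ a, PIsLA lam m x w a := by
  obtain ⟨a, hxa, ha, hmin⟩ := h.exists_first_at_level (Nat.le_add_right _ _) hw
  exact ⟨a, hxa, ha.ge, hmin⟩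

/-- While the next label on `e_k` does not exceed the successor of `q` in `λ(e_{k+1})`, the parent
is red with a larger label that is still `≤ c`; otherwise it is blue. -/
lemma exists_anc_le_of_le_mem_succ {k : ℕ} (hk : k + 1 < m) {c : ℤ} (hc : c ∈ lam (k + 1))
    {q : ℤ} (hq : q ∈ lam k) (hqc : q ≤ c) : ∃ q' ≤ c, PAnc lam m (q, k) (q', k + 1) := by
  have hsucc := eSucc_le hc (iE_le_iE.mpr hqc)
  obtain ⟨q', hq'X, hq'⟩ := exists_iE_eq_eSucc (ne_top_of_le_ne_top (iE_lt_top c).ne hsucc)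
  have hq'c : q' ≤ c := iE_le_iE.mp (hq' ▸ hsucc)
  by_cases hred : eSucc (iE (q + 1)) (lam k) ≤ iE q'
  · obtain ⟨q₂, hq₂X, hq₂⟩ := exists_iE_eq_eSucc (ne_top_of_le_ne_top (iE_lt_top q').ne hred)
    have hqq₂ : q + 1 ≤ q₂ := iE_le_iE.mp (hq₂ ▸ le_eSucc _ _)
    have hq₂q' : q₂ ≤ q' := iE_le_iE.mp (hq₂ ▸ hred)
    have hpar : PParent lam m (q, k) (q₂, k) :=
      ⟨hq, by omega, .inl ⟨rfl, hq₂X, hq₂, .inr (hq₂ ▸ hred.trans hq'.le)⟩⟩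
    obtain ⟨q'', hq''c, hanc⟩ := exists_anc_le_of_le_mem_succ hk hc hq₂X (by omega)
    exact ⟨q'', hq''c, .head hpar hanc⟩
  · exact ⟨q', hq'c, .single ⟨hq, by omega, .inr ⟨rfl, hk, hq'X, hq', not_le.mp hred⟩⟩⟩
termination_by (c - q).toNat

end Forest

section Journey

variable {lam : ℕ → Set ℤ} {i j : ℕ} {dep arr : ℤ}

lemma PJourney.dep_mem (h : PJourney lam i j dep arr) (hij : i < j) : dep ∈ lam i := by
  obtain ⟨f, hmem, -, rfl, -⟩ := h
  exact hmem i le_rfl hij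

lemma PJourney.single (h : dep ∈ lam i) : PJourney lam i (i + 1) dep dep :=
  ⟨fun _ => dep, fun k hik hk => by rwa [show k = i by omega], fun _ _ _ => le_rfl, rfl, rfl⟩

lemma PJourney.eq_of_single (h : PJourney lam i (i + 1) dep arr) : dep = arr := by
  obtain ⟨f, -, -, rfl, rfl⟩ := h
  simp

lemma PJourney.exists_init (h : PJourney lam i (j + 2) dep arr) (hij : i ≤ j) :
    ∃ a ≤ arr, arr ∈ lam (j + 1) ∧ PJourney lam i (j + 1) dep a := by
  obtain ⟨f, hmem, hmono, rfl, rfl⟩ := h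
  exact ⟨f j, hmono j hij (by omega), hmem _ (by omega) (by omega),
    f, fun k hik hk => hmem k hik (by omega), fun k hik hk => hmono k hik (by omega), rfl, rfl⟩

lemma PJourney.raise_last (h : PJourney lam i (j + 1) dep arr) (hij : i ≤ j) {a : ℤ}
    (ha : a ∈ lam j) (harr : arr ≤ a) : ∃ dep' ≥ dep, PJourney lam i (j + 1) dep' a := by
  obtain ⟨f, hmem, hmono, rfl, rfl⟩ := h
  simp only [Nat.add_sub_cancel] at harr ⊢
  refine ⟨Function.update f j a i, ?_, Function.update f j a, fun k hik hk => ?_,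
    fun k hik hk => ?_, rfl, by simp⟩
  · rcases eq_or_ne i j with rfl | hne
    · simpa using harr
    · simp [Function.update_of_ne hne]
  · rcases eq_or_ne k j with rfl | hne
    · simpa using ha
    · simpa [Function.update_of_ne hne] using hmem k hik hk
  · rw [Function.update_of_ne (by omega)]
    rcases eq_or_ne (k + 1) j with hkj | hne
    · subst hkj; simpa using (hmono k hik (by omega)).trans harr
    · simpa [Function.update_of_ne hne] using hmono k hik (by omega)

lemma PJourney.snoc (h : PJourney lam i (j + 1) dep arr) (hij : i ≤ j) {a : ℤ}
    (ha : a ∈ lam (j + 1)) (harr : arr ≤ a) : PJourney lam i (j + 2) dep a := by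
  obtain ⟨f, hmem, hmono, rfl, rfl⟩ := h
  simp only [Nat.add_sub_cancel] at harr
  refine ⟨Function.update f (j + 1) a, fun k hik hk => ?_, fun k hik hk => ?_,
    by simp [Function.update_of_ne (show i ≠ j + 1 by omega)], by simp⟩
  · rcases eq_or_ne k (j + 1) with rfl | hne
    · simpa using ha
    · simpa [Function.update_of_ne hne] using hmem k hik (by omega)
  · rw [Function.update_of_ne (by omega)]
    rcases eq_or_ne (k + 1) (j + 1) with hkj | hne
    · rw [hkj, Function.update_self, show k = j by omega]; exact harr
    · simpa [Function.update_of_ne hne] using hmono k hik (by omega)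

end Journey

section Correspondence

variable {lam : ℕ → Set ℤ} {m i : ℕ} {ℓ : ℤ}

lemma exists_journey_of_anc (hℓ : ℓ ∈ lam i) {y : ℤ × ℕ} (h : PAnc lam m (ℓ, i) y) :
    ∃ dep ≥ ℓ, PJourney lam i (y.2 + 1) dep y.1 := by
  induction h with
  | refl => exact ⟨ℓ, le_rfl, .single hℓ⟩
  | @tail b y hb hby ih =>
    obtain ⟨dep, hdep, hJ⟩ := ih
    have hib : i ≤ b.2 := PAnc.le hb |>.2
    obtain ⟨hy, ⟨hy2, hlt⟩ | ⟨hy2, hle⟩⟩ := hby.mem_and_step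
    · rw [hy2] at hy ⊢
      obtain ⟨dep', hdep', hJ'⟩ := hJ.raise_last hib hy hlt.le
      exact ⟨dep', hdep.trans hdep', hJ'⟩
    · rw [hy2] at hy ⊢
      exact ⟨dep, hdep, hJ.snoc hib hy hle⟩

lemma exists_anc_le_of_journey (hℓ : ℓ ∈ lam i) {j : ℕ} (hij : i ≤ j) (hjm : j < m)
    {dep arr : ℤ} (hJ : PJourney lam i (j + 1) dep arr) (hℓdep : ℓ ≤ dep) :
    ∃ q ≤ arr, PAnc lam m (ℓ, i) (q, j) := by
  induction j, hij using Nat.le_induction generalizing arr with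
  | base => exact ⟨ℓ, hJ.eq_of_single ▸ hℓdep, .refl⟩
  | succ j hij ih =>
    obtain ⟨a, harr, harrmem, hJ'⟩ := hJ.exists_init hij
    obtain ⟨q, hqa, hanc⟩ := ih (by omega) hJ'
    obtain ⟨q', hq', hanc'⟩ :=
      exists_anc_le_of_le_mem_succ hjm harrmem (hanc.mem hℓ) (hqa.trans harr)
    exact ⟨q', hq', hanc.trans hanc'⟩

end Correspondence

lemma pEA_le_of_journey {lam : ℕ → Set ℤ} {i j : ℕ} {t : EReal} {dep arr : ℤ}
    (hJ : PJourney lam i j dep arr) (ht : t ≤ iE dep) : pEA lam i j t ≤ iE arr :=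
  sInf_le ⟨dep, arr, hJ, ht, rfl⟩

lemma le_pEA {lam : ℕ → Set ℤ} {i j : ℕ} {t b : EReal}
    (h : ∀ dep arr, PJourney lam i j dep arr → t ≤ iE dep → b ≤ iE arr) : b ≤ pEA lam i j t :=
  le_sInf fun _ ⟨dep, arr, hJ, ht, ha⟩ => ha ▸ h dep arr hJ ht

/-- Correctness of the earliest-arrival query on a temporal path with vertices
`v₀, …, v_{n−1}`: for `i < j` and `ℓ = succ(t, λ(e_i))`, `EA(v_i, v_j, t) = +∞` if
`ℓ = +∞` or the `(j−i−1)`-th weighted level ancestor of `(ℓ, i)` does not exist;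
otherwise that ancestor is of the form `(ℓ*, j−1)` and `EA(v_i, v_j, t) = ℓ*`. -/
theorem pEA_level_ancestor_correct (n : ℕ) (lam : ℕ → Set ℤ) (i j : ℕ)
    (hij : i < j) (hj : j ≤ n - 1) (t : EReal) :
    (eSucc t (lam i) = ⊤ → pEA lam i j t = ⊤) ∧
      (∀ ℓ : ℤ, ℓ ∈ lam i → iE ℓ = eSucc t (lam i) →
        ((¬ ∃ a, PIsLA lam (n - 1) (ℓ, i) (j - i - 1) a) → pEA lam i j t = ⊤) ∧
          (∀ a : ℤ × ℕ, PIsLA lam (n - 1) (ℓ, i) (j - i - 1) a →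
            a.2 = j - 1 ∧ pEA lam i j t = iE a.1)) := by
  obtain ⟨k, rfl⟩ : ∃ k, j = k + 1 := ⟨j - 1, by omega⟩
  refine ⟨fun htop => eq_top_iff.mpr (le_pEA fun dep arr hJ ht => ?_), fun ℓ hℓ hℓt => ?_⟩
  · have := (htop ▸ eSucc_le (hJ.dep_mem hij) ht).trans_lt (iE_lt_top dep)
    exact absurd this (lt_irrefl _)
  have hanc : ∀ dep arr, PJourney lam i (k + 1) dep arr → t ≤ iE dep →
      ∃ q ≤ arr, PAnc lam (n - 1) (ℓ, i) (q, k) := fun dep arr hJ ht =>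
    exists_anc_le_of_journey hℓ (by omega) (by omega) hJ
      ((le_iE_iff_of_iE_eq_eSucc hℓt (hJ.dep_mem hij)).mp ht)
  refine ⟨fun hno => eq_top_iff.mpr (le_pEA fun dep arr hJ ht => ?_), fun a ha => ?_⟩
  · obtain ⟨q, -, hq⟩ := hanc dep arr hJ ht
    exact (hno (exists_PIsLA hq (by simp only; omega))).elim
  have ha2 : a.2 = k := by have := ha.snd_eq; simp only at this; omega
  obtain ⟨dep, hdep, hJ⟩ := exists_journey_of_anc hℓ ha.1
  rw [ha2] at hJ
  refine ⟨by omega, le_antisymm (pEA_le_of_journey hJ ?_) (le_pEA fun dep arr hJ ht => ?_)⟩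
  · exact (le_iE_iff_of_iE_eq_eSucc hℓt (hJ.dep_mem hij)).mpr hdep
  · obtain ⟨q, hq, hancq⟩ := hanc dep arr hJ ht
    exact iE_le_iE.mpr ((ha.2.2 _ hancq (by simp only; omega)).le.1.trans hq)
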